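/- Let q be a power of an odd prime, let n > 3 be odd with gcd(n, q - 1) = 1, let δ ∈ F_{q^n}^* with δ ≠ 1 and δ^{q-1} = 1, and let r be a positive integer with r < n and gcd(r, n) = 1. Then the map S : F_{q^n} → F_{q^n} given by S(x) = x^q + δx^{q^{2r+1}} is scattered of index r + 1 over F_{q^n}; moreover, S is scattered of index t over F_{q^n} for every t ∈ {1, r + 1, 2r + 1}. -/

import Mathlib

/-! For nonzero `y, z` the scattering condition of each index turns into an equation between
`q`-power Frobenius images of `c = y / z`. For the indices `1` and `2r + 1` the two monomials of
`S` separate and give `c ^ q ^ (2r + 1) = c ^ q`, i.e. `c` is fixed by the `q ^ (2r)`-Frobenius;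
as `gcd(2r, n) = 1` this forces `c ∈ F_q`. For the index `r + 1`, the element
`w = y^q z^(q^(r+1)) - z^q y^(q^(r+1))` satisfies `w = δ w^(q^r)`; iterating `n` times gives
`w = N(δ) w = δ^n w`, and `δ^n ≠ 1` because the order of `δ` divides both `n` and `q - 1`.
Hence `w = 0`, so `c` is fixed by the `q ^ r`-Frobenius and lies in `F_q` since `gcd(r, n) = 1`. -/

/-- A map `S : L → L` on the field `L = F_{q^n}` is scattered of index `t` over
`F_{q^n}/F_q` if for all nonzero `y, z`, `S(y)/y^{q^t} = S(z)/z^{q^t}` implies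
`y/z ∈ F_q`.  Membership of `y/z` in the subfield `F_q` is expressed via its
characterization as the fixed field of the `q`-power Frobenius: `(y/z)^q = y/z`. -/
def IsScattered (q t : ℕ) {L : Type} [Field L] (S : L → L) : Prop :=
  ∀ y z : L, y ≠ 0 → z ≠ 0 → S y * z ^ q ^ t = S z * y ^ q ^ t → (y / z) ^ q = y / z

theorem pow_pow_eq_self_of_pow_eq_self {M : Type*} [Monoid M] {a : M} {m : ℕ} (h : a ^ m = a)
    (k : ℕ) : a ^ m ^ k = a := by
  have := Function.iterate_fixed (f := (· ^ m)) h k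
  rwa [pow_iterate] at this

theorem div_pow_eq_div_pow_of_mul_eq {K : Type*} [Field K] {y z : K} (hz : z ≠ 0) {a b : ℕ}
    (h : y ^ a * z ^ b = z ^ a * y ^ b) : (y / z) ^ a = (y / z) ^ b := by
  rw [div_pow, div_pow, div_eq_div_iff (pow_ne_zero _ hz) (pow_ne_zero _ hz)]
  linear_combination h

theorem eq_zero_of_eq_mul_pow_pow {G : Type*} [CommGroupWithZero G] {δ v : G} {q r n : ℕ}
    (hδ : δ ^ q = δ) (hδn : δ ^ n ≠ 1) (hv : v ^ q ^ (r * n) = v) (h : v = δ * v ^ q ^ r) :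
    v = 0 := by
  have iterate : ∀ k, v = δ ^ k * v ^ q ^ (r * k) := by
    intro k
    induction k with
    | zero => simp
    | succ k ih =>
      calc v = δ ^ k * (δ * v ^ q ^ r) ^ q ^ (r * k) := by rwa [← h]
        _ = δ ^ (k + 1) * v ^ q ^ (r * (k + 1)) := by
          rw [mul_pow, pow_pow_eq_self_of_pow_eq_self hδ, ← pow_mul, ← pow_add, mul_add_one,
            add_comm, pow_succ, mul_assoc]
  by_contra hv0
  refine hδn (mul_right_cancel₀ hv0 ?_)
  calc δ ^ n * v = δ ^ n * v ^ q ^ (r * n) := by rw [hv]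
    _ = 1 * v := by rw [← iterate n, one_mul]

section FiniteField

variable {L : Type*} [Field L] [Fintype L] {q n : ℕ}

theorem pow_pow_eq_self_of_card_eq_pow (hcard : Fintype.card L = q ^ n) (x : L) :
    x ^ q ^ n = x :=
  hcard ▸ FiniteField.pow_card x

theorem sub_pow_pow_of_card_eq_pow (hcard : Fintype.card L = q ^ n) (x y : L) (k : ℕ) :
    (x - y) ^ q ^ k = x ^ q ^ k - y ^ q ^ k := by
  obtain ⟨p, _, m, hp, hpm⟩ := FiniteField.card' L
  have hn : n ≠ 0 := by
    rintro rfl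
    exact (Fintype.one_lt_card (α := L)).ne' (by rw [hcard, pow_zero])
  -- `q` divides the power `p ^ m` of the characteristic, so it is a power of `p` itself
  obtain ⟨i, -, rfl⟩ := (Nat.dvd_prime_pow hp).1 (hpm ▸ hcard ▸ dvd_pow_self q hn)
  have := Fact.mk hp
  rw [← pow_mul]
  exact sub_pow_char_pow x y _

theorem pow_eq_self_of_pow_pow_eq_self (hcard : Fintype.card L = q ^ n) {k : ℕ}
    (hk : k.Coprime n) {c : L} (hc : c ^ q ^ k = c) : c ^ q = c := by
  have periodic : ∀ m, c ^ q ^ m = c → Function.IsPeriodicPt (· ^ q) m c := fun m h => by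
    simpa [Function.IsPeriodicPt, Function.IsFixedPt, pow_iterate] using h
  have := (periodic k hc).gcd (periodic n (pow_pow_eq_self_of_card_eq_pow hcard c))
  rw [hk] at this
  simpa [Function.IsPeriodicPt, Function.IsFixedPt] using this

theorem pow_eq_self_of_pow_pow_succ_eq (hcard : Fintype.card L = q ^ n) {k : ℕ}
    (hk : k.Coprime n) {c : L} (hc : c ^ q ^ (k + 1) = c ^ q) : c ^ q = c := by
  refine pow_eq_self_of_pow_pow_eq_self hcard hk
    (sub_eq_zero.1 (eq_zero_of_pow_eq_zero (n := q) ?_))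
  simpa [← pow_mul, ← pow_succ, hc] using sub_pow_pow_of_card_eq_pow hcard (c ^ q ^ k) c 1

end FiniteField

section Scattered

variable {L : Type} [Field L] [Fintype L] {q n : ℕ} (δ : L)

theorem isScattered_one (hcard : Fintype.card L = q ^ n) (hδ : δ ≠ 0) {k : ℕ}
    (hk : k.Coprime n) : IsScattered q 1 (fun x : L => x ^ q + δ * x ^ q ^ (k + 1)) := by
  intro y z _ hz h
  have hyz : y ^ q ^ (k + 1) * z ^ q = z ^ q ^ (k + 1) * y ^ q :=
    mul_left_cancel₀ hδ (by rw [pow_one] at h; linear_combination h)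
  exact pow_eq_self_of_pow_pow_succ_eq hcard hk (div_pow_eq_div_pow_of_mul_eq hz hyz)

theorem isScattered_succ (hcard : Fintype.card L = q ^ n) {k : ℕ} (hk : k.Coprime n) :
    IsScattered q (k + 1) (fun x : L => x ^ q + δ * x ^ q ^ (k + 1)) := by
  intro y z _ hz h
  have hyz : y ^ q * z ^ q ^ (k + 1) = z ^ q * y ^ q ^ (k + 1) := by linear_combination h
  exact pow_eq_self_of_pow_pow_succ_eq hcard hk (div_pow_eq_div_pow_of_mul_eq hz hyz).symm

theorem isScattered_succ_of_pow_ne_one (hcard : Fintype.card L = q ^ n) (hδq : δ ^ q = δ)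
    (hδn : δ ^ n ≠ 1) {r : ℕ} (hr : r.Coprime n) :
    IsScattered q (r + 1) (fun x : L => x ^ q + δ * x ^ q ^ (2 * r + 1)) := by
  intro y z _ hz h
  set w := y ^ q * z ^ q ^ (r + 1) - z ^ q * y ^ q ^ (r + 1)
  have hw_pow : w ^ q ^ r =
      y ^ q ^ (r + 1) * z ^ q ^ (2 * r + 1) - z ^ q ^ (r + 1) * y ^ q ^ (2 * r + 1) := by
    simp only [w, sub_pow_pow_of_card_eq_pow hcard, mul_pow, ← pow_mul, ← pow_add, ← pow_succ']
    ring_nf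
  have hw_fixed : w ^ q ^ (r * n) = w := by
    rw [mul_comm, pow_mul]
    exact pow_pow_eq_self_of_pow_eq_self (pow_pow_eq_self_of_card_eq_pow hcard w) r
  have hw : w = 0 :=
    eq_zero_of_eq_mul_pow_pow hδq hδn hw_fixed (by rw [hw_pow]; linear_combination h)
  exact pow_eq_self_of_pow_pow_succ_eq hcard hr
    (div_pow_eq_div_pow_of_mul_eq hz (sub_eq_zero.1 hw)).symm

end Scattered

theorem stmt15_general (q n r : ℕ)
    (hodd : Odd n) (hgcdqn : Nat.gcd n (q - 1) = 1)
    (hgcdrn : Nat.gcd r n = 1)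
    (L : Type) [Field L] [Fintype L] (hcard : Fintype.card L = q ^ n)
    (δ : L) (hδ0 : δ ≠ 0) (hδ1 : δ ≠ 1) (hδord : δ ^ (q - 1) = 1) :
    IsScattered q (r + 1) (fun x : L => x ^ q + δ * x ^ q ^ (2 * r + 1)) ∧
    ∀ t ∈ ({1, r + 1, 2 * r + 1} : Set ℕ),
      IsScattered q t (fun x : L => x ^ q + δ * x ^ q ^ (2 * r + 1)) := by
  have hq0 : q ≠ 0 := by
    rintro rfl
    exact Fintype.card_ne_zero (hcard.trans (zero_pow hodd.pos.ne'))
  have hδq : δ ^ q = δ := by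
    rw [← Nat.sub_add_cancel (Nat.one_le_iff_ne_zero.2 hq0), pow_succ, hδord, one_mul]
  have hδn : δ ^ n ≠ 1 := fun h => hδ1 ((pow_eq_one_iff_of_coprime hgcdqn).1 ⟨h, hδord⟩)
  have h2r : (2 * r).Coprime n := Nat.Coprime.mul_left (Nat.coprime_two_left.2 hodd) hgcdrn
  have hmiddle := isScattered_succ_of_pow_ne_one δ hcard hδq hδn hgcdrn
  refine ⟨hmiddle, ?_⟩
  rintro t (rfl | rfl | rfl)
  · exact isScattered_one δ hcard hδ0 h2r
  · exact hmiddle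
  · exact isScattered_succ δ hcard h2r

/-- Let q be a power of an odd prime, n > 3 odd with
gcd(n, q - 1) = 1, δ ∈ F_{q^n}^* with δ ≠ 1 and δ^{q-1} = 1, and r a positive
integer with r < n and gcd(r, n) = 1.  Then S(x) = x^q + δx^{q^{2r+1}} is
scattered of index r + 1 over F_{q^n}; moreover, S is scattered of index t for
every t ∈ {1, r + 1, 2r + 1}. -/
theorem stmt15 (q n r : ℕ)
    (hq : ∃ p m : ℕ, p.Prime ∧ Odd p ∧ 0 < m ∧ q = p ^ m)
    (hn : 3 < n) (hodd : Odd n) (hgcdqn : Nat.gcd n (q - 1) = 1)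
    (hr : 0 < r) (hrn : r < n) (hgcdrn : Nat.gcd r n = 1)
    (L : Type) [Field L] [Fintype L] (hcard : Fintype.card L = q ^ n)
    (δ : L) (hδ0 : δ ≠ 0) (hδ1 : δ ≠ 1) (hδord : δ ^ (q - 1) = 1) :
    IsScattered q (r + 1) (fun x : L => x ^ q + δ * x ^ q ^ (2 * r + 1)) ∧
    ∀ t ∈ ({1, r + 1, 2 * r + 1} : Set ℕ),
      IsScattered q t (fun x : L => x ^ q + δ * x ^ q ^ (2 * r + 1)) :=
  stmt15_general q n r hodd hgcdqn hgcdrn L hcard δ hδ0 hδ1 hδord
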